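/- For R, R_x ∈ SO(3) with Ψ(R,R_x) ≤ ψ_p < 1, the attitude error vector satisfies ‖e_R‖ = √(Ψ(2-Ψ)) ≤ √(ψ_p(2-ψ_p)) < 1. -/

import Mathlib

open Matrix

noncomputable def enorm3 (v : Fin 3 → ℝ) : ℝ := ‖(WithLp.equiv 2 (Fin 3 → ℝ)).symm v‖

def vee (A : Matrix (Fin 3) (Fin 3) ℝ) : Fin 3 → ℝ := ![A 2 1, A 0 2, A 1 0]

noncomputable def Psi (R Rx : Matrix (Fin 3) (Fin 3) ℝ) : ℝ :=
  (1 / 2) * Matrix.trace (1 - Rxᵀ * R)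

noncomputable def eRvec (R Rx : Matrix (Fin 3) (Fin 3) ℝ) : Fin 3 → ℝ :=
  (1 / 2 : ℝ) • vee (Rxᵀ * R - Rᵀ * Rx)

/-!
With `Q = Rxᵀ R ∈ SO(3)` one has `Ψ = (3 - tr Q)/2` and `e_R = ½ vee (Q - Qᵀ)`. Comparing the
diagonals of `QᵀQ = 1` and `adj Q = Qᵀ` gives `‖vee (Q - Qᵀ)‖² = (1 + tr Q)(3 - tr Q) = 4 Ψ(2 - Ψ)`.
The bounds hold because `ψ ↦ ψ(2 - ψ) = 1 - (1 - ψ)²` increases on `ψ ≤ 1` and is `< 1` for `ψ ≠ 1`.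
-/

lemma Matrix.adjugate_eq_transpose_of_orthogonal {n α : Type*} [Fintype n] [DecidableEq n]
    [CommRing α] {Q : Matrix n n α} (hQ : Qᵀ * Q = 1) (hdet : Q.det = 1) : Q.adjugate = Qᵀ :=
  calc Q.adjugate = Qᵀ * Q * Q.adjugate := by rw [hQ, Matrix.one_mul]
    _ = Qᵀ := by rw [Matrix.mul_assoc, mul_adjugate, hdet, one_smul, Matrix.mul_one]

lemma Matrix.orthogonal_transpose_mul {n α : Type*} [Fintype n] [DecidableEq n] [CommRing α]
    {R Rx : Matrix n n α} (hR : Rᵀ * R = 1) (hRx : Rxᵀ * Rx = 1) :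
    (Rxᵀ * R)ᵀ * (Rxᵀ * R) = 1 := by
  rw [transpose_mul, transpose_transpose, Matrix.mul_assoc, ← Matrix.mul_assoc Rx,
    mul_eq_one_comm.mp hRx, Matrix.one_mul, hR]

lemma sum_sq_vee_sub_transpose {Q : Matrix (Fin 3) (Fin 3) ℝ} (hQ : Qᵀ * Q = 1)
    (hdet : Q.det = 1) :
    ∑ i, vee (Q - Qᵀ) i ^ 2 = (1 + Q.trace) * (3 - Q.trace) := by
  have hadj := adjugate_eq_transpose_of_orthogonal hQ hdet
  have col (j : Fin 3) := congrFun (congrFun hQ j) j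
  simp only [mul_apply, Fin.sum_univ_three, one_apply_eq, transpose_apply] at col
  have minor0 := congrFun (congrFun hadj 0) 0
  have minor1 := congrFun (congrFun hadj 1) 1
  have minor2 := congrFun (congrFun hadj 2) 2
  simp only [Fin.isValue, adjugate_fin_three, of_apply, cons_val', cons_val_zero,
    cons_val_fin_one, transpose_apply, cons_val_one, cons_val] at minor0 minor1 minor2
  simp only [vee, Fin.isValue, Matrix.sub_apply, transpose_apply, Fin.sum_univ_three, cons_val_zero,
    cons_val_one, cons_val, trace_fin_three]
  linear_combination col 0 + col 1 + col 2 + 2 * minor0 + 2 * minor1 + 2 * minor2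

lemma enorm3_eq_sqrt (v : Fin 3 → ℝ) : enorm3 v = √(∑ i, v i ^ 2) := by
  simp [enorm3, EuclideanSpace.norm_eq]

lemma psi_eq (R Rx : Matrix (Fin 3) (Fin 3) ℝ) : Psi R Rx = (3 - (Rxᵀ * R).trace) / 2 := by
  rw [Psi, trace_sub, trace_one, Fintype.card_fin]
  ring

lemma eRvec_eq (R Rx : Matrix (Fin 3) (Fin 3) ℝ) :
    eRvec R Rx = (1 / 2 : ℝ) • vee (Rxᵀ * R - (Rxᵀ * R)ᵀ) := by
  rw [eRvec, transpose_mul, transpose_transpose]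

lemma enorm3_eRvec {R Rx : Matrix (Fin 3) (Fin 3) ℝ} (hR : Rᵀ * R = 1) (hRdet : R.det = 1)
    (hRx : Rxᵀ * Rx = 1) (hRxdet : Rx.det = 1) :
    enorm3 (eRvec R Rx) = √(Psi R Rx * (2 - Psi R Rx)) := by
  have hdet : (Rxᵀ * R).det = 1 := by
    rw [det_mul, det_transpose, hRxdet, hRdet, one_mul]
  have hsq := sum_sq_vee_sub_transpose (orthogonal_transpose_mul hR hRx) hdet
  rw [enorm3_eq_sqrt, eRvec_eq, psi_eq]
  congr 1
  simp only [Pi.smul_apply, smul_eq_mul, mul_pow, ← Finset.mul_sum, hsq]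
  ring

lemma sqrt_mul_two_sub_le_of_le {ψ ψp : ℝ} (hψ : ψ ≤ ψp) (hψp : ψp ≤ 1) :
    √(ψ * (2 - ψ)) ≤ √(ψp * (2 - ψp)) :=
  Real.sqrt_le_sqrt (by nlinarith)

lemma sqrt_mul_two_sub_lt_one {ψ : ℝ} (hψ : ψ ≠ 1) : √(ψ * (2 - ψ)) < 1 := by
  rw [Real.sqrt_lt' one_pos]
  nlinarith [sq_pos_of_ne_zero (sub_ne_zero.mpr hψ)]

theorem stmt6_general (R Rx : Matrix (Fin 3) (Fin 3) ℝ) (ψp : ℝ)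
    (hR : Rᵀ * R = 1) (hRdet : R.det = 1)
    (hRx : Rxᵀ * Rx = 1) (hRxdet : Rx.det = 1)
    (hψp1 : ψp < 1)
    (hΨ : Psi R Rx ≤ ψp) :
    enorm3 (eRvec R Rx) = Real.sqrt (Psi R Rx * (2 - Psi R Rx)) ∧
    Real.sqrt (Psi R Rx * (2 - Psi R Rx)) ≤ Real.sqrt (ψp * (2 - ψp)) ∧
    Real.sqrt (ψp * (2 - ψp)) < 1 :=
  ⟨enorm3_eRvec hR hRdet hRx hRxdet, sqrt_mul_two_sub_le_of_le hΨ hψp1.le,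
    sqrt_mul_two_sub_lt_one hψp1.ne⟩

theorem stmt6 (R Rx : Matrix (Fin 3) (Fin 3) ℝ) (ψp : ℝ)
    (hR : Rᵀ * R = 1) (hRdet : R.det = 1)
    (hRx : Rxᵀ * Rx = 1) (hRxdet : Rx.det = 1)
    (hψp0 : 0 ≤ ψp) (hψp1 : ψp < 1)
    (hΨ : Psi R Rx ≤ ψp) :
    enorm3 (eRvec R Rx) = Real.sqrt (Psi R Rx * (2 - Psi R Rx)) ∧
    Real.sqrt (Psi R Rx * (2 - Psi R Rx)) ≤ Real.sqrt (ψp * (2 - ψp)) ∧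
    Real.sqrt (ψp * (2 - ψp)) < 1 :=
  stmt6_general R Rx ψp hR hRdet hRx hRxdet hψp1 hΨ
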